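/- arXiv:2010.15163 — 2 statements merged into one kernel-verified Lean document; each statement's English description precedes it below -/
import Mathlib

section
/- Let (cl_n, cl_∞) be a consistent system of closure operations, (Π_{m,n}, Π) a weakly consistent system of maps compatible with (cl_n), and (A_n) a Π-invariant cl-closed chain whose limit A_∞ is cl_∞-closed. If the chain stabilizes (there is r such that (Π_{m,n}(A_m))^{cl_n} = A_n for all n ≥ m ≥ r) and is eventually finitely generated (A_n = G_n^{cl_n} for some finite G_n ⊆ A_n, for all large n), then A_∞ is Π-equivariantly finitely generated: there is a finite G ⊆ A_∞ with A_∞ = (Π(G))^{cl_∞}. -/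
/-!
Choose `m` beyond both the stabilization index and the finite-generation threshold, and a finite
`G` with `cl_m G = A_m`. For `n ≥ m`, compatibility transports the generators:
`A_n = cl_n (Π_{m,n} (cl_m G)) ⊆ cl_n (Π_{m,n} G) ⊆ cl_n (Π G ∩ S_n) = cl_∞ (Π G) ∩ S_n`,
the last step by consistency. Conversely `Π G = ⋃_{n ≥ m} Π_{m,n} G` lies in the union of the
`A_n`, which is `cl_∞`-closed.
-/

def IsClosureOn {α : Type*} (X : Set α) (c : Set α → Set α) : Prop :=
  (∀ A : Set α, A ⊆ X → A ⊆ c A) ∧ (∀ A : Set α, A ⊆ X → c A ⊆ X) ∧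
  (∀ A : Set α, A ⊆ X → c (c A) = c A) ∧
  (∀ A B : Set α, A ⊆ B → B ⊆ X → c A ⊆ c B)

def imSet {α : Type*} (P : Set (α → α)) (A : Set α) : Set α :=
  {y | ∃ π ∈ P, ∃ v ∈ A, y = π v}

open Set

namespace IsClosureOn

variable {α : Type*} {X : Set α} {c : Set α → Set α} {A B : Set α}

theorem subset_closure (hc : IsClosureOn X c) (hA : A ⊆ X) : A ⊆ c A := hc.1 A hA

theorem closure_subset (hc : IsClosureOn X c) (hA : A ⊆ X) : c A ⊆ X := hc.2.1 A hA

theorem closure_closure (hc : IsClosureOn X c) (hA : A ⊆ X) : c (c A) = c A := hc.2.2.1 A hA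

theorem closure_mono (hc : IsClosureOn X c) (hAB : A ⊆ B) (hB : B ⊆ X) : c A ⊆ c B :=
  hc.2.2.2 A B hAB hB

theorem closure_subset_closure_of_subset_closure (hc : IsClosureOn X c) (hAB : A ⊆ c B)
    (hB : B ⊆ X) : c A ⊆ c B :=
  (hc.closure_mono hAB (hc.closure_subset hB)).trans (hc.closure_closure hB).le

end IsClosureOn

section imSet

variable {α : Type*} {P : Set (α → α)} {A B X Y : Set α}

theorem imSet_mono (hAB : A ⊆ B) : imSet P A ⊆ imSet P B := by
  rintro _ ⟨π, hπ, v, hv, rfl⟩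
  exact ⟨π, hπ, v, hAB hv, rfl⟩

theorem imSet_subset_of_mapsTo (hP : ∀ π ∈ P, ∀ v ∈ X, π v ∈ Y) (hA : A ⊆ X) :
    imSet P A ⊆ Y := by
  rintro _ ⟨π, hπ, v, hv, rfl⟩
  exact hP π hπ v (hA hv)

end imSet

theorem local_fg_implies_global_fg_general {α : Type*} (S : ℕ → Set α)
    (cl : ℕ → Set α → Set α) (clinf : Set α → Set α)
    (Pi : Set (α → α)) (P : ℕ → ℕ → Set (α → α))
    (A : ℕ → Set α)
    (hcl : ∀ n, IsClosureOn (S n) (cl n))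
    (hclinf : IsClosureOn Set.univ clinf)
    (hconsCl : ∀ (n : ℕ) (B : Set α), cl n (B ∩ S n) = clinf B ∩ S n)
    (hmap : ∀ m n : ℕ, m ≤ n → ∀ π ∈ P m n, ∀ v ∈ S m, π v ∈ S n)
    (hweak : ∀ (m : ℕ) (B : Set α), B ⊆ S m →
      imSet Pi B = ⋃ n, ⋃ (_ : m ≤ n), imSet (P m n) B)
    (hcompat : ∀ m n : ℕ, m ≤ n → ∀ B : Set α, B ⊆ S m →
      imSet (P m n) (cl m B) ⊆ cl n (imSet (P m n) B))
    (hAsub : ∀ n, A n ⊆ S n)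
    (hAmono : ∀ m n : ℕ, m ≤ n → A m ⊆ A n)
    (hlimclosed : clinf (⋃ k, A k) = ⋃ k, A k)
    (hstab : ∃ r : ℕ, ∀ m n : ℕ, r ≤ m → m ≤ n →
      cl n (imSet (P m n) (A m)) = A n)
    (hfg : ∃ N : ℕ, ∀ n, N ≤ n →
      ∃ G : Set α, G.Finite ∧ G ⊆ A n ∧ cl n G = A n) :
    ∃ G : Set α, G.Finite ∧ G ⊆ (⋃ k, A k) ∧
      clinf (imSet Pi G) = ⋃ k, A k := by
  obtain ⟨r, hr⟩ := hstab
  obtain ⟨N, hN⟩ := hfg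
  set m := max r N
  obtain ⟨G, hGfin, hGA, hGcl⟩ := hN m (le_max_right r N)
  have hGS : G ⊆ S m := hGA.trans (hAsub m)
  have hPG : ∀ n, m ≤ n → imSet (P m n) G ⊆ S n := fun n hn ↦
    imSet_subset_of_mapsTo (hmap m n hn) hGS
  have hPG_A : ∀ n, m ≤ n → imSet (P m n) G ⊆ A n := fun n hn ↦ by
    rw [← hr m n (le_max_left r N) hn]
    exact (imSet_mono hGA).trans
      ((hcl n).subset_closure (imSet_subset_of_mapsTo (hmap m n hn) (hAsub m)))
  have hA_cl : ∀ n, m ≤ n → A n ⊆ clinf (imSet Pi G) := fun n hn ↦ by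
    have hPG_Pi : imSet (P m n) G ⊆ imSet Pi G ∩ S n := fun y hy ↦
      ⟨hweak m G hGS ▸ mem_iUnion₂.2 ⟨n, hn, hy⟩, hPG n hn hy⟩
    calc A n = cl n (imSet (P m n) (cl m G)) := by rw [hGcl, hr m n (le_max_left r N) hn]
      _ ⊆ cl n (imSet (P m n) G) :=
        (hcl n).closure_subset_closure_of_subset_closure (hcompat m n hn G hGS) (hPG n hn)
      _ ⊆ cl n (imSet Pi G ∩ S n) := (hcl n).closure_mono hPG_Pi inter_subset_right
      _ = clinf (imSet Pi G) ∩ S n := hconsCl n _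
      _ ⊆ clinf (imSet Pi G) := inter_subset_left
  have hPi_A : imSet Pi G ⊆ ⋃ k, A k := by
    rw [hweak m G hGS]
    exact iUnion₂_subset fun n hn ↦ (hPG_A n hn).trans (subset_iUnion A n)
  refine ⟨G, hGfin, hGA.trans (subset_iUnion A m), subset_antisymm ?_ ?_⟩
  · exact hlimclosed ▸ hclinf.closure_mono hPi_A (subset_univ _)
  · exact iUnion_subset fun k ↦
      (hAmono k (max k m) (le_max_left k m)).trans (hA_cl _ (le_max_right k m))

/-- Local-to-global finite generation: if a Π-invariant, cl-closed chain with
cl∞-closed limit stabilizes and is eventually finitely generated, then the limit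
is Π-equivariantly finitely generated. -/
theorem local_fg_implies_global_fg {α : Type*} (S : ℕ → Set α)
    (cl : ℕ → Set α → Set α) (clinf : Set α → Set α)
    (Pi : Set (α → α)) (P : ℕ → ℕ → Set (α → α))
    (A : ℕ → Set α)
    (hchain : ∀ m n : ℕ, m ≤ n → S m ⊆ S n)
    (hunion : (⋃ n, S n) = Set.univ)
    (hcl : ∀ n, IsClosureOn (S n) (cl n))
    (hclinf : IsClosureOn Set.univ clinf)
    (hconsCl : ∀ (n : ℕ) (B : Set α), cl n (B ∩ S n) = clinf B ∩ S n)
    (hmap : ∀ m n : ℕ, m ≤ n → ∀ π ∈ P m n, ∀ v ∈ S m, π v ∈ S n)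
    (hweak : ∀ (m : ℕ) (B : Set α), B ⊆ S m →
      imSet Pi B = ⋃ n, ⋃ (_ : m ≤ n), imSet (P m n) B)
    (hcompat : ∀ m n : ℕ, m ≤ n → ∀ B : Set α, B ⊆ S m →
      imSet (P m n) (cl m B) ⊆ cl n (imSet (P m n) B))
    (hAsub : ∀ n, A n ⊆ S n)
    (hAmono : ∀ m n : ℕ, m ≤ n → A m ⊆ A n)
    (hAclosed : ∀ n, cl n (A n) = A n)
    (hAinv : ∀ m n : ℕ, m ≤ n → cl n (imSet (P m n) (A m)) ⊆ A n)
    (hlimclosed : clinf (⋃ k, A k) = ⋃ k, A k)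
    (hstab : ∃ r : ℕ, ∀ m n : ℕ, r ≤ m → m ≤ n →
      cl n (imSet (P m n) (A m)) = A n)
    (hfg : ∃ N : ℕ, ∀ n, N ≤ n →
      ∃ G : Set α, G.Finite ∧ G ⊆ A n ∧ cl n G = A n) :
    ∃ G : Set α, G.Finite ∧ G ⊆ (⋃ k, A k) ∧
      clinf (imSet Pi G) = ⋃ k, A k :=
  local_fg_implies_global_fg_general S cl clinf Pi P A hcl hclinf hconsCl hmap hweak hcompat hAsub
    hAmono hlimclosed hstab hfg
end

section
/- For natural numbers m < n, every strictly increasing map π : ℕ → ℕ with π(m) ≤ n can be written as a composition π₂ ∘ π₁ where π₁ : ℕ → ℕ is strictly increasing with π₁(m) ≤ m+1 and π₂ : ℕ → ℕ is strictly increasing with π₂(m+1) ≤ n. That is, Inc_{m,n} = Inc_{m+1,n} ∘ Inc_{m,m+1}. -/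
/-!
Pick a value `u ≤ n` missed by `π` on `{0, …, m}` (pigeonhole, as `m < n`) and let
`S = range π ∪ {u}`. Then `π` factors through the increasing enumeration `Nat.nth` of `S`:
`π₁ = Nat.count S ∘ π` records the position of `π k` in `S`, and `π₂ = Nat.nth S`. Below `π m`,
`S` contains only `π 0, …, π (m - 1)` and possibly `u`, so `π₁ m ≤ m + 1`; and `π 0, …, π m, u`
are `m + 2` elements of `S` that are `≤ n`, so `π₂ (m + 1) ≤ n`.
-/

open Finset

theorem exists_mem_range_notMem_image_range (f : ℕ → ℕ) {m n : ℕ} (hmn : m < n) :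
    ∃ u ∈ range (n + 1), u ∉ (range (m + 1)).image f :=
  exists_mem_notMem_of_card_lt_card <| by
    grw [card_image_le, card_range, card_range]
    omega

section InsertRange

variable {π : ℕ → ℕ} {u : ℕ} [DecidablePred (· ∈ insert u (Set.range π))]

theorem count_insert_range_apply_le (hπ : StrictMono π) (m : ℕ) :
    Nat.count (· ∈ insert u (Set.range π)) (π m) ≤ m + 1 := by
  rw [Nat.count_eq_card_filter_range]
  calc #{x ∈ range (π m) | x ∈ insert u (Set.range π)}
      ≤ #(insert u ((range m).image π)) := by
        refine card_le_card fun x hx => ?_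
        simp only [mem_filter, mem_range, Set.mem_insert_iff, Set.mem_range] at hx
        obtain ⟨hx, rfl | ⟨k, rfl⟩⟩ := hx
        · exact mem_insert_self _ _
        · exact mem_insert_of_mem (mem_image_of_mem π (mem_range.2 (hπ.lt_iff_lt.1 hx)))
    _ ≤ m + 1 := by grw [card_insert_le, card_image_le, card_range]

theorem lt_count_insert_range (hπ : StrictMono π) {m n : ℕ} (hm : π m ≤ n)
    (hun : u ∈ range (n + 1)) (hu : u ∉ (range (m + 1)).image π) :
    m + 1 < Nat.count (· ∈ insert u (Set.range π)) (n + 1) := by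
  rw [Nat.count_eq_card_filter_range]
  calc m + 1 < #(insert u ((range (m + 1)).image π)) := by
        rw [card_insert_of_notMem hu, card_image_of_injective _ hπ.injective, card_range]
        omega
    _ ≤ #{x ∈ range (n + 1) | x ∈ insert u (Set.range π)} := by
        refine card_le_card fun x hx => ?_
        simp only [mem_insert, mem_image, mem_range] at hx
        simp only [mem_filter, mem_range, Set.mem_insert_iff, Set.mem_range]
        obtain rfl | ⟨k, hk, rfl⟩ := hx
        · exact ⟨mem_range.1 hun, Or.inl rfl⟩
        · exact ⟨by grw [hπ.monotone (Nat.lt_succ_iff.1 hk)]; omega, Or.inr ⟨k, rfl⟩⟩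

end InsertRange

/-- `Inc_{m,n} = Inc_{m+1,n} ∘ Inc_{m,m+1}` for `m < n`. -/
theorem inc_decomposition_succ (m n : ℕ) (hmn : m < n) (π : ℕ → ℕ) :
    (StrictMono π ∧ π m ≤ n) ↔
      ∃ π₁ π₂ : ℕ → ℕ, StrictMono π₁ ∧ π₁ m ≤ m + 1 ∧
        StrictMono π₂ ∧ π₂ (m + 1) ≤ n ∧ π = π₂ ∘ π₁ := by
  classical
  constructor
  · rintro ⟨hπ, hπm⟩
    obtain ⟨u, hun, hu⟩ := exists_mem_range_notMem_image_range π hmn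
    set p : ℕ → Prop := (· ∈ insert u (Set.range π))
    have hp : ∀ k, p (π k) := fun k => Set.mem_insert_of_mem _ ⟨k, rfl⟩
    refine ⟨Nat.count p ∘ π, Nat.nth p, fun a b hab => Nat.count_strict_mono (hp a) (hπ hab),
      count_insert_range_apply_le hπ m, Nat.nth_strictMono ?_, ?_, ?_⟩
    · exact (Set.infinite_range_of_injective hπ.injective).mono (Set.subset_insert _ _)
    · exact Nat.lt_succ_iff.1 (Nat.nth_lt_of_lt_count (lt_count_insert_range hπ hπm hun hu))
    · funext k
      exact (Nat.nth_count (hp k)).symm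
  · rintro ⟨π₁, π₂, h1, h1m, h2, h2m, rfl⟩
    exact ⟨h2.comp h1, (h2.monotone h1m).trans h2m⟩
end
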